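/- The Dyck paths of order n are partitioned by the fibers of θ: Dyck(n) = disjoint union over Motzkin paths m of order n of B(m); moreover, if rk(m) = i, then the induced subposet (B(m), ≤) of the noncrossing partition order on Dyck paths is isomorphic to the boolean lattice B_{n-1-2i}. In particular, the noncrossing partition lattice NC(n) admits a symmetric boolean decomposition. -/

import Mathlib

/-!
The signed height of a path at its odd lattice points is `1 + 2 h`, where `h` is the height of
the corresponding point of its Motzkin path `θ(p)`. Hence `θ` sends Dyck paths to Motzkin paths,
and conversely a path with `θ(p) = m` Motzkin, starting up and ending down, is a Dyck path.
Within the fiber `B(m)` a path is determined, freely, by choosing at each level step of `m`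
whether it becomes an up-down or a down-up pair; this identifies `B(m)` with the subsets of the
`n - 1 - 2 rk(m)` level steps. Turning a down-up pair into an up-down pair raises one even
lattice point and fixes all odd ones, so it can only merge blocks of Stump's partition; this
makes the identification an order isomorphism onto the boolean lattice.
-/

open Finset

/-- Number of up steps (`true`) among the first `k` steps of `p`. -/
def upCount {m : ℕ} (p : Fin m → Bool) (k : ℕ) : ℕ :=
  (Finset.univ.filter fun i : Fin m => (i : ℕ) < k ∧ p i = true).card

/-- Number of down steps (`false`) among the first `k` steps of `p`. -/
def downCount {m : ℕ} (p : Fin m → Bool) (k : ℕ) : ℕ :=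
  (Finset.univ.filter fun i : Fin m => (i : ℕ) < k ∧ p i = false).card

/-- `p` is a Dyck path of order `n`: a path of `2n` steps (up = `true`,
down = `false`), with `n` up steps, never going below the x-axis. -/
def IsDyck (n : ℕ) (p : Fin (2 * n) → Bool) : Prop :=
  upCount p (2 * n) = n ∧ ∀ k < 2 * n + 1, downCount p k ≤ upCount p k

instance (n : ℕ) : DecidablePred (IsDyck n) := fun p => by
  unfold IsDyck; infer_instance

/-- The Finset of Dyck paths of order `n`. -/
def dyckSet (n : ℕ) : Finset (Fin (2 * n) → Bool) :=
  Finset.univ.filter (IsDyck n)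

/-- Height of the path after `k` steps. -/
def height {n : ℕ} (p : Fin (2 * n) → Bool) (k : ℕ) : ℕ :=
  upCount p k - downCount p k

/-- The area of a Dyck path: the number of unused lattice points strictly below
the path and weakly above the x-axis (equivalently, the number of
`1/√2 × 1/√2` diamonds fitting between the path and the x-axis). -/
def area {n : ℕ} (p : Fin (2 * n) → Bool) : ℕ :=
  ∑ k ∈ Finset.range (2 * n + 1), height p k / 2

/-- The `j`-th step of `p` (defaulting to `false` out of range). -/
def stepAt {m : ℕ} (p : Fin m → Bool) (j : ℕ) : Bool :=
  if h : j < m then p ⟨j, h⟩ else false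

/-- The rank of a Dyck path of order `n` in the noncrossing partition lattice
under Stump's bijection: equivalently (Simion–Ullman) the number of letters `b`
and `r` in its SU-word, i.e. the number of `i ∈ {1,…,n-1}` for which the step
leaving the `i`-th odd lattice point (the step with index `2i-1`, 0-indexed)
is an up step. -/
def rk {n : ℕ} (p : Fin (2 * n) → Bool) : ℕ :=
  ((Finset.Icc 1 (n - 1)).filter fun i => stepAt p (2 * i - 1) = true).card

def upM {k : ℕ} (m : Fin k → Option Bool) (j : ℕ) : ℕ :=
  (Finset.univ.filter fun i : Fin k => (i : ℕ) < j ∧ m i = some true).card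

def downM {k : ℕ} (m : Fin k → Option Bool) (j : ℕ) : ℕ :=
  (Finset.univ.filter fun i : Fin k => (i : ℕ) < j ∧ m i = some false).card

/-- A Motzkin word (`some true` = up, `some false` = down, `none` = level):
as many ups as downs, every prefix having at least as many ups as downs.
A Motzkin path of order `n` is such a word of length `n-1`. -/
def IsMotzkin {k : ℕ} (m : Fin k → Option Bool) : Prop :=
  upM m k = downM m k ∧ ∀ j < k + 1, downM m j ≤ upM m j

instance (k : ℕ) : DecidablePred (IsMotzkin (k := k)) := fun m => by
  unfold IsMotzkin; infer_instance

/-- The Finset of Motzkin paths of order `n` (length `n-1`). -/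
def motzSet (n : ℕ) : Finset (Fin (n - 1) → Option Bool) :=
  Finset.univ.filter IsMotzkin

/-- The rank of a Motzkin path: its number of up steps. -/
def rkM {k : ℕ} (m : Fin k → Option Bool) : ℕ := upM m k

def mext {k : ℕ} (m : Fin k → Option Bool) (i : ℕ) : Option Bool :=
  if h : i < k then m ⟨i, h⟩ else none

/-- ρ : Motzkin paths of order `n` → Dyck paths of order `n`.  Prepend an up
step and append a down step; up steps become two up steps, down steps two down
steps, and each level step becomes a down-up pair. -/
def rho (n : ℕ) (m : Fin (n - 1) → Option Bool) : Fin (2 * n) → Bool := fun j =>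
  if (j : ℕ) = 0 then true
  else if (j : ℕ) = 2 * n - 1 then false
  else
    match mext m (((j : ℕ) - 1) / 2) with
    | some b => b
    | none => decide ((j : ℕ) % 2 = 0)

/-- The area of a Motzkin path is the area of the Dyck path `ρ(m)`. -/
def areaM (n : ℕ) (m : Fin (n - 1) → Option Bool) : ℕ := area (rho n m)

/-- θ : Dyck paths of order `n` → Motzkin paths of order `n`, joining
consecutive odd lattice points of the path: the segment between the `i`-th and
`(i+1)`-st odd points (steps `2i+1`, `2i+2`, 0-indexed) becomes an up, down, or
level step accordingly. -/
def theta (n : ℕ) (p : Fin (2 * n) → Bool) : Fin (n - 1) → Option Bool := fun i =>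
  match stepAt p (2 * (i : ℕ) + 1), stepAt p (2 * (i : ℕ) + 2) with
  | true, true => some true
  | false, false => some false
  | _, _ => none

/-- Stump's relation on `{0,…,n-1}` (0-indexed version of `{1,…,n}`): `a` and
`b` are in the same block of the noncrossing partition `φ(p)` iff their odd
lattice points have the same height and the path between them does not pass
below that height. -/
def stumpRel {n : ℕ} (p : Fin (2 * n) → Bool) (a b : ℕ) : Prop :=
  height p (2 * a + 1) = height p (2 * b + 1) ∧
  ∀ x, 2 * a + 1 ≤ x → x ≤ 2 * b + 1 → height p (2 * a + 1) ≤ height p x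

/-- The partial order on Dyck paths pulled back from the noncrossing partition
lattice (reverse refinement) via Stump's bijection: `p ≤ q` iff `φ(p)` refines
`φ(q)`. -/
def dyckLE {n : ℕ} (p q : Fin (2 * n) → Bool) : Prop :=
  ∀ a b : ℕ, a ≤ b → b < n → stumpRel p a b → stumpRel q a b

theorem card_filter_val_lt_succ {M : ℕ} (Q : Fin M → Prop) [DecidablePred Q] {k : ℕ}
    (hk : k < M) :
    #{i : Fin M | (i : ℕ) < k + 1 ∧ Q i} =
      #{i : Fin M | (i : ℕ) < k ∧ Q i} + if Q ⟨k, hk⟩ then 1 else 0 := by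
  split_ifs with hQ
  · rw [← card_insert_of_notMem (a := ⟨k, hk⟩) (by simp)]
    congr 1
    ext i
    simp only [mem_filter, mem_univ, true_and, mem_insert, Fin.ext_iff]
    grind
  · rw [add_zero]
    congr 1
    ext i
    simp only [mem_filter, mem_univ, true_and]
    grind

theorem stepAt_of_lt {M : ℕ} (p : Fin M → Bool) {j : ℕ} (hj : j < M) :
    stepAt p j = p ⟨j, hj⟩ := dif_pos hj

theorem lt_of_stepAt_eq_true {M : ℕ} {p : Fin M → Bool} {j : ℕ} (h : stepAt p j = true) :
    j < M := by
  by_contra hj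
  simp [stepAt, hj] at h

theorem funext_stepAt {M : ℕ} {p q : Fin M → Bool} (h : ∀ j < M, stepAt p j = stepAt q j) :
    p = q := by
  funext j
  simpa only [stepAt_of_lt _ j.isLt] using h j j.isLt

def stepSign : Bool → ℤ
  | true => 1
  | false => -1

def stepSignM : Option Bool → ℤ
  | some b => stepSign b
  | none => 0

/-- Unlike `height`, not truncated at `0`. -/
def walk {M : ℕ} (p : Fin M → Bool) (k : ℕ) : ℤ := upCount p k - downCount p k

def walkM {K : ℕ} (m : Fin K → Option Bool) (j : ℕ) : ℤ := upM m j - downM m j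

@[simp] theorem walk_zero {M : ℕ} (p : Fin M → Bool) : walk p 0 = 0 := by
  simp [walk, upCount, downCount]

theorem walk_succ {M : ℕ} (p : Fin M → Bool) {k : ℕ} (hk : k < M) :
    walk p (k + 1) = walk p k + stepSign (stepAt p k) := by
  simp only [walk, upCount, downCount, card_filter_val_lt_succ _ hk, stepAt_of_lt p hk]
  cases p ⟨k, hk⟩ <;> simp [stepSign] <;> ring

@[simp] theorem walkM_zero {K : ℕ} (m : Fin K → Option Bool) : walkM m 0 = 0 := by
  simp [walkM, upM, downM]

theorem walkM_succ {K : ℕ} (m : Fin K → Option Bool) {j : ℕ} (hj : j < K) :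
    walkM m (j + 1) = walkM m j + stepSignM (m ⟨j, hj⟩) := by
  simp only [walkM, upM, downM, card_filter_val_lt_succ _ hj]
  rcases m ⟨j, hj⟩ with _ | _ | _ <;> simp [stepSignM, stepSign] <;> ring

theorem upCount_add_downCount {M : ℕ} (p : Fin M → Bool) {k : ℕ} (hk : k ≤ M) :
    upCount p k + downCount p k = k := by
  induction k with
  | zero => simp [upCount, downCount]
  | succ k ih =>
    simp only [upCount, downCount, card_filter_val_lt_succ _ hk] at ih ⊢
    have := ih (by omega)
    cases p ⟨k, hk⟩ <;> simp <;> omega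

theorem height_eq_walk {n : ℕ} {p : Fin (2 * n) → Bool} {k : ℕ} (h : 0 ≤ walk p k) :
    (height p k : ℤ) = walk p k := by
  simp only [walk] at h ⊢
  rw [height, Nat.cast_sub (by omega)]

theorem isDyck_iff_walk {n : ℕ} (p : Fin (2 * n) → Bool) :
    IsDyck n p ↔ walk p (2 * n) = 0 ∧ ∀ k ≤ 2 * n, 0 ≤ walk p k := by
  have htotal := upCount_add_downCount p le_rfl
  simp only [IsDyck, walk, Nat.lt_succ_iff, sub_nonneg, Nat.cast_le]
  exact and_congr_left' (by omega)

theorem isMotzkin_iff_mwalk {K : ℕ} (m : Fin K → Option Bool) :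
    IsMotzkin m ↔ walkM m K = 0 ∧ ∀ j ≤ K, 0 ≤ walkM m j := by
  simp only [IsMotzkin, walkM, Nat.lt_succ_iff, sub_nonneg, Nat.cast_le, sub_eq_zero,
    Nat.cast_inj]

section Theta

variable {n : ℕ} {p : Fin (2 * n) → Bool}

theorem theta_eq_some_iff (i : Fin (n - 1)) (b : Bool) :
    theta n p i = some b ↔ stepAt p (2 * i + 1) = b ∧ stepAt p (2 * i + 2) = b := by
  unfold theta
  cases stepAt p (2 * i + 1) <;> cases stepAt p (2 * i + 2) <;> cases b <;> simp

theorem theta_eq_none_iff (i : Fin (n - 1)) :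
    theta n p i = none ↔ stepAt p (2 * i + 2) = !stepAt p (2 * i + 1) := by
  unfold theta
  cases stepAt p (2 * i + 1) <;> cases stepAt p (2 * i + 2) <;> simp

theorem stepSign_add_stepSign_eq (i : Fin (n - 1)) :
    stepSign (stepAt p (2 * i + 1)) + stepSign (stepAt p (2 * i + 2)) =
      2 * stepSignM (theta n p i) := by
  unfold theta
  cases stepAt p (2 * i + 1) <;> cases stepAt p (2 * i + 2) <;> simp [stepSignM, stepSign]

theorem walk_add_two (i : Fin (n - 1)) :
    walk p (2 * i + 1 + 2) = walk p (2 * i + 1) + 2 * stepSignM (theta n p i) := by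
  rw [← stepSign_add_stepSign_eq, walk_succ p (by omega), walk_succ p (by omega), add_assoc]

theorem walk_odd_eq (h0 : stepAt p 0 = true) :
    ∀ i ≤ n - 1, walk p (2 * i + 1) = 1 + 2 * walkM (theta n p) i := by
  have hn : 0 < 2 * n := lt_of_stepAt_eq_true h0
  intro i hi
  induction i with
  | zero => simp [walk_succ p hn, h0, stepSign]
  | succ i ih =>
    have hi' : i < n - 1 := by omega
    rw [show 2 * (i + 1) + 1 = 2 * i + 1 + 2 by ring, walk_add_two ⟨i, hi'⟩, ih hi'.le,
      walkM_succ _ hi']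
    ring

end Theta

theorem neg_one_le_stepSign (b : Bool) : -1 ≤ stepSign b := by
  cases b <;> simp [stepSign]

theorem exists_eq_odd_or_eq_even {k : ℕ} (hk : 1 ≤ k) : ∃ i, k = 2 * i + 1 ∨ k = 2 * i + 2 :=
  ⟨(k - 1) / 2, by omega⟩

section Dyck

variable {n : ℕ} {p : Fin (2 * n) → Bool}

theorem walk_two_mul (hn : 1 ≤ n) :
    walk p (2 * n) = walk p (2 * n - 1) + stepSign (stepAt p (2 * n - 1)) := by
  have := walk_succ p (k := 2 * n - 1) (by omega)
  rwa [show 2 * n - 1 + 1 = 2 * n by omega] at this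

theorem IsDyck.stepAt_zero (hp : IsDyck n p) (hn : 1 ≤ n) : stepAt p 0 = true := by
  have hwalk := ((isDyck_iff_walk p).mp hp).2 1 (by omega)
  rw [walk_succ p (by omega), walk_zero, zero_add] at hwalk
  revert hwalk
  cases stepAt p 0 <;> simp [stepSign]

theorem IsDyck.stepAt_last (hp : IsDyck n p) (hn : 1 ≤ n) : stepAt p (2 * n - 1) = false := by
  obtain ⟨hend, hnonneg⟩ := (isDyck_iff_walk p).mp hp
  have hlast := hnonneg (2 * n - 1) (by omega)
  rw [walk_two_mul hn] at hend
  cases hstep : stepAt p (2 * n - 1)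
  · rfl
  · rw [hstep, stepSign] at hend
    omega

theorem IsDyck.walk_pred_last (hp : IsDyck n p) (hn : 1 ≤ n) : walk p (2 * n - 1) = 1 := by
  have hend := ((isDyck_iff_walk p).mp hp).1
  rw [walk_two_mul hn, hp.stepAt_last hn] at hend
  simpa [stepSign, add_neg_eq_zero] using hend

theorem IsDyck.isMotzkin_theta (hp : IsDyck n p) (hn : 1 ≤ n) : IsMotzkin (theta n p) := by
  have hodd := walk_odd_eq (hp.stepAt_zero hn)
  refine (isMotzkin_iff_mwalk _).mpr ⟨?_, fun j hj => ?_⟩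
  · have := hodd (n - 1) le_rfl
    rw [show 2 * (n - 1) + 1 = 2 * n - 1 by omega, hp.walk_pred_last hn] at this
    omega
  · have := ((isDyck_iff_walk p).mp hp).2 (2 * j + 1) (by omega)
    rw [hodd j hj] at this
    omega

theorem isDyck_of_isMotzkin_theta (hm : IsMotzkin (theta n p)) (h0 : stepAt p 0 = true)
    (hlast : stepAt p (2 * n - 1) = false) : IsDyck n p := by
  have hn : 0 < 2 * n := lt_of_stepAt_eq_true h0
  obtain ⟨hend, hnonneg⟩ := (isMotzkin_iff_mwalk _).mp hm
  have hodd := walk_odd_eq h0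
  refine (isDyck_iff_walk p).mpr ⟨?_, fun k hk => ?_⟩
  · have hpred := hodd (n - 1) le_rfl
    rw [show 2 * (n - 1) + 1 = 2 * n - 1 by omega, hend] at hpred
    rw [walk_two_mul (by omega), hpred, hlast]
    rfl
  rcases Nat.eq_zero_or_pos k with rfl | hk0
  · simp
  obtain ⟨i, rfl | rfl⟩ := exists_eq_odd_or_eq_even hk0
  · have := hnonneg i (by omega)
    rw [hodd i (by omega)]
    omega
  · have := hnonneg i (by omega)
    have := neg_one_le_stepSign (stepAt p (2 * i + 1))
    rw [walk_succ p (by omega), hodd i (by omega)]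
    omega

end Dyck

section Fiber

variable {n : ℕ}

theorem eq_of_theta_eq {p q : Fin (2 * n) → Bool} (h0 : stepAt p 0 = stepAt q 0)
    (hlast : stepAt p (2 * n - 1) = stepAt q (2 * n - 1)) (hθ : theta n p = theta n q)
    (hlevel : ∀ i, theta n p i = none → stepAt p (2 * i + 1) = stepAt q (2 * i + 1)) :
    p = q := by
  have hodd (i : Fin (n - 1)) : stepAt p (2 * i + 1) = stepAt q (2 * i + 1) := by
    cases hi : theta n p i with
    | none => exact hlevel i hi
    | some b =>
      rw [((theta_eq_some_iff i b).mp hi).1, ((theta_eq_some_iff i b).mp (hθ ▸ hi)).1]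
  have heven (i : Fin (n - 1)) : stepAt p (2 * i + 2) = stepAt q (2 * i + 2) := by
    cases hi : theta n p i with
    | none =>
      rw [(theta_eq_none_iff i).mp hi, (theta_eq_none_iff i).mp (hθ ▸ hi), hodd i]
    | some b =>
      rw [((theta_eq_some_iff i b).mp hi).2, ((theta_eq_some_iff i b).mp (hθ ▸ hi)).2]
  refine funext_stepAt fun j hj => ?_
  rcases Nat.eq_zero_or_pos j with rfl | hj0
  · exact h0
  by_cases hjl : j = 2 * n - 1
  · rw [hjl, hlast]
  obtain ⟨i, rfl | rfl⟩ := exists_eq_odd_or_eq_even hj0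
  · exact hodd ⟨i, by omega⟩
  · exact heven ⟨i, by omega⟩

/-- The path of the fiber over `m` in which the level steps of `m` indexed by `S` become
up-down pairs and the other level steps down-up pairs. -/
def liftPath (n : ℕ) (m : Fin (n - 1) → Option Bool) (S : Finset (Fin (n - 1))) :
    Fin (2 * n) → Bool := fun j =>
  if (j : ℕ) = 0 then true
  else if h : ((j : ℕ) - 1) / 2 < n - 1 then
    (m ⟨_, h⟩).getD (decide ((⟨_, h⟩ : Fin (n - 1)) ∈ S ↔ (j : ℕ) % 2 = 1))
  else false

variable (m : Fin (n - 1) → Option Bool) (S : Finset (Fin (n - 1)))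

theorem stepAt_liftPath_zero (hn : 1 ≤ n) : stepAt (liftPath n m S) 0 = true := by
  simp [stepAt_of_lt _ (show 0 < 2 * n by omega), liftPath]

theorem stepAt_liftPath_last (hn : 1 ≤ n) : stepAt (liftPath n m S) (2 * n - 1) = false := by
  rw [stepAt_of_lt _ (by omega), liftPath, if_neg (by dsimp only; omega),
    dif_neg (by dsimp only; omega)]

theorem stepAt_liftPath_odd (i : Fin (n - 1)) :
    stepAt (liftPath n m S) (2 * i + 1) = (m i).getD (decide (i ∈ S)) := by
  rw [stepAt_of_lt _ (by omega), liftPath, if_neg (by simp), dif_pos (by simp)]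
  simp

theorem stepAt_liftPath_even (i : Fin (n - 1)) :
    stepAt (liftPath n m S) (2 * i + 2) = (m i).getD (!decide (i ∈ S)) := by
  rw [stepAt_of_lt _ (by omega), liftPath, if_neg (by simp), dif_pos (by simp; omega)]
  simp [show (2 * (i : ℕ) + 1) / 2 = i by omega]

theorem theta_liftPath : theta n (liftPath n m S) = m := by
  funext i
  cases hi : m i with
  | none =>
    rw [theta_eq_none_iff, stepAt_liftPath_odd, stepAt_liftPath_even, hi]
    rfl
  | some b =>
    rw [theta_eq_some_iff, stepAt_liftPath_odd, stepAt_liftPath_even, hi]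
    exact ⟨rfl, rfl⟩

end Fiber

section Order

variable {n : ℕ} {p q : Fin (2 * n) → Bool}

theorem IsDyck.stumpRel_iff (hp : IsDyck n p) {a b : ℕ} (hab : a ≤ b) (hb : b < n) :
    stumpRel p a b ↔ walk p (2 * a + 1) = walk p (2 * b + 1) ∧
      ∀ x, 2 * a + 1 ≤ x → x ≤ 2 * b + 1 → walk p (2 * a + 1) ≤ walk p x := by
  have hheight (k : ℕ) (hk : k ≤ 2 * n) : (height p k : ℤ) = walk p k :=
    height_eq_walk (((isDyck_iff_walk p).mp hp).2 k hk)
  rw [stumpRel, ← Nat.cast_inj (R := ℤ), hheight _ (by omega), hheight _ (by omega)]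
  refine and_congr_right' (forall_congr' fun x => imp_congr_right fun _ =>
    imp_congr_right fun hx => ?_)
  rw [← Nat.cast_le (α := ℤ), hheight _ (by omega), hheight _ (by omega)]

theorem dyckLE_of_oddStep_imp (hp : IsDyck n p) (hq : IsDyck n q)
    (hθ : theta n p = theta n q)
    (hstep : ∀ i, theta n p i = none → stepAt p (2 * i + 1) = true →
      stepAt q (2 * i + 1) = true) :
    dyckLE p q := by
  intro a b hab hb hrel
  have hn : 1 ≤ n := by omega
  have hodd (i : ℕ) (hi : i ≤ n - 1) : walk p (2 * i + 1) = walk q (2 * i + 1) := by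
    rw [walk_odd_eq (hp.stepAt_zero hn) i hi, walk_odd_eq (hq.stepAt_zero hn) i hi, hθ]
  have hsign (i : Fin (n - 1)) :
      stepSign (stepAt p (2 * i + 1)) ≤ stepSign (stepAt q (2 * i + 1)) := by
    cases hi : theta n p i with
    | none =>
      cases hpi : stepAt p (2 * i + 1)
      · exact neg_one_le_stepSign _
      · rw [hstep i hi hpi]
    | some c =>
      rw [((theta_eq_some_iff i c).mp hi).1, ((theta_eq_some_iff i c).mp (hθ ▸ hi)).1]
  have hle (x : ℕ) (hx1 : 1 ≤ x) (hx2 : x ≤ 2 * n - 1) : walk p x ≤ walk q x := by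
    obtain ⟨i, rfl | rfl⟩ := exists_eq_odd_or_eq_even hx1
    · exact (hodd i (by omega)).le
    · rw [walk_succ p (by omega), walk_succ q (by omega), hodd i (by omega)]
      gcongr
      exact hsign ⟨i, by omega⟩
  rw [hp.stumpRel_iff hab hb] at hrel
  rw [hq.stumpRel_iff hab hb, ← hodd a (by omega), ← hodd b (by omega)]
  exact ⟨hrel.1, fun x hx1 hx2 => (hrel.2 x hx1 hx2).trans (hle x (by omega) (by omega))⟩

/-- If `p` goes up and `q` goes down at the level step `i`, then `i` and `i + 1` are in the same
block for `p`, since `p` makes a peak between them, but not for `q`, which dips below. -/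
theorem oddStep_imp_of_dyckLE (hp : IsDyck n p) (hq : IsDyck n q) (hle : dyckLE p q)
    (i : Fin (n - 1)) (hi : theta n p i = none) (hpi : stepAt p (2 * i + 1) = true) :
    stepAt q (2 * i + 1) = true := by
  by_contra hqi
  rw [Bool.not_eq_true] at hqi
  have hpeak : stumpRel p i (i + 1) := by
    rw [hp.stumpRel_iff (by omega) (by omega),
      show 2 * ((i : ℕ) + 1) + 1 = 2 * i + 1 + 2 by ring, walk_add_two, hi]
    refine ⟨by simp [stepSignM], fun x hx1 hx2 => ?_⟩
    obtain rfl | rfl | rfl : x = 2 * i + 1 ∨ x = 2 * i + 2 ∨ x = 2 * i + 1 + 2 := by omega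
    · exact le_rfl
    · simp [walk_succ p (show 2 * (i : ℕ) + 1 < 2 * n by omega), hpi, stepSign]
    · simp [walk_add_two, hi, stepSignM]
  have hvalley := ((hq.stumpRel_iff (by omega) (by omega)).mp (hle _ _ (by omega)
    (by omega) hpeak)).2 (2 * i + 2) (by omega) (by omega)
  simp [walk_succ q (show 2 * (i : ℕ) + 1 < 2 * n by omega), hqi, stepSign] at hvalley

theorem dyckLE_iff_oddStep_imp (hp : IsDyck n p) (hq : IsDyck n q)
    (hθ : theta n p = theta n q) :
    dyckLE p q ↔ ∀ i, theta n p i = none → stepAt p (2 * i + 1) = true →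
      stepAt q (2 * i + 1) = true :=
  ⟨oddStep_imp_of_dyckLE hp hq, dyckLE_of_oddStep_imp hp hq hθ⟩

end Order

theorem card_levels {K : ℕ} {m : Fin K → Option Bool} (hm : IsMotzkin m) :
    Fintype.card {i // m i = none} = K - 2 * rkM m := by
  have hsplit := card_eq_sum_card_fiberwise (f := m) (s := univ) (t := univ) (by simp)
  rw [Fintype.sum_option, Fintype.sum_bool, card_univ, Fintype.card_fin] at hsplit
  have hup : upM m K = #{i | m i = some true} := by simp [upM]
  have hdown : downM m K = #{i | m i = some false} := by simp [downM]
  have hbalanced : upM m K = downM m K := hm.1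
  rw [Fintype.card_subtype, rkM]
  omega

section BooleanFiber

variable {n : ℕ} {m : Fin (n - 1) → Option Bool}

def levelUps (m : Fin (n - 1) → Option Bool) (p : Fin (2 * n) → Bool) :
    Finset {i // m i = none} :=
  {i | stepAt p (2 * (i : ℕ) + 1) = true}

theorem exists_fiber_equiv_finset_levels (hn : 1 ≤ n) (hm : IsMotzkin m) :
    ∃ e : {p : Fin (2 * n) → Bool // p ∈ (dyckSet n).filter fun p => theta n p = m}
        ≃ Finset {i // m i = none},
      ∀ p q, dyckLE p.1 q.1 ↔ e p ⊆ e q := by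
  have hfiber (p : {p : Fin (2 * n) → Bool // p ∈ (dyckSet n).filter fun p => theta n p = m}) :
      IsDyck n p.1 ∧ theta n p.1 = m := by
    simpa [dyckSet] using p.2
  let F (p : {p : Fin (2 * n) → Bool // p ∈ (dyckSet n).filter fun p => theta n p = m}) :
      Finset {i // m i = none} :=
    levelUps m p.1
  have hinj : F.Injective := by
    intro p q hpq
    obtain ⟨hp, hθp⟩ := hfiber p
    obtain ⟨hq, hθq⟩ := hfiber q
    refine Subtype.ext (eq_of_theta_eq (by rw [hp.stepAt_zero hn, hq.stepAt_zero hn])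
      (by rw [hp.stepAt_last hn, hq.stepAt_last hn]) (hθp.trans hθq.symm) fun i hi => ?_)
    have hmem : (⟨i, hθp ▸ hi⟩ : {i // m i = none}) ∈ F p ↔ ⟨i, hθp ▸ hi⟩ ∈ F q := by
      rw [hpq]
    simp only [F, levelUps, mem_filter, mem_univ, true_and] at hmem
    exact Bool.eq_iff_iff.mpr hmem
  have hsurj : F.Surjective := by
    intro S
    let p := liftPath n m (S.map (Function.Embedding.subtype _))
    have hθ : theta n p = m := theta_liftPath m _
    have hp : IsDyck n p := isDyck_of_isMotzkin_theta (hθ ▸ hm)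
      (stepAt_liftPath_zero m _ hn) (stepAt_liftPath_last m _ hn)
    refine ⟨⟨p, by simp [dyckSet, hp, hθ]⟩, ?_⟩
    ext i
    simp [F, levelUps, p, stepAt_liftPath_odd, i.2]
  refine ⟨Equiv.ofBijective _ ⟨hinj, hsurj⟩, fun p q => ?_⟩
  obtain ⟨hp, hθp⟩ := hfiber p
  obtain ⟨hq, hθq⟩ := hfiber q
  rw [dyckLE_iff_oddStep_imp hp hq (hθp.trans hθq.symm), hθp]
  simp [F, levelUps, Finset.subset_iff]

theorem exists_fiber_equiv_finset_fin (hn : 1 ≤ n) (hm : IsMotzkin m) :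
    ∃ e : {p : Fin (2 * n) → Bool // p ∈ (dyckSet n).filter fun p => theta n p = m}
        ≃ Finset (Fin (n - 1 - 2 * rkM m)),
      ∀ p q, dyckLE p.1 q.1 ↔ e p ⊆ e q := by
  obtain ⟨e, he⟩ := exists_fiber_equiv_finset_levels hn hm
  refine ⟨e.trans (Fintype.equivFinOfCardEq (card_levels hm)).finsetCongr, fun p q => ?_⟩
  simp [he, Equiv.finsetCongr_apply, Finset.map_subset_map]

end BooleanFiber

/-- The Dyck paths of order `n` are partitioned by the fibers `B(m)` of `θ`
over Motzkin paths `m`, and each fiber `B(m)` with `rk(m) = i`, with the order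
pulled back from the noncrossing partition lattice, is isomorphic to the
boolean lattice `B_{n-1-2i}`: a symmetric boolean decomposition of `NC(n)`. -/
theorem symmetric_boolean_decomposition (n : ℕ) (hn : 1 ≤ n) :
    (dyckSet n =
      (motzSet n).biUnion fun m => (dyckSet n).filter fun p => theta n p = m) ∧
    (∀ m ∈ motzSet n, ∀ m' ∈ motzSet n, m ≠ m' →
      Disjoint ((dyckSet n).filter fun p => theta n p = m)
        ((dyckSet n).filter fun p => theta n p = m')) ∧
    ∀ m ∈ motzSet n,
      ∃ e : {p : Fin (2 * n) → Bool // p ∈ (dyckSet n).filter fun p => theta n p = m}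
            ≃ Finset (Fin (n - 1 - 2 * rkM m)),
        ∀ p q, dyckLE p.1 q.1 ↔ e p ⊆ e q := by
  refine ⟨?_, ?_, fun m hm => exists_fiber_equiv_finset_fin hn (mem_filter.mp hm).2⟩
  · ext p
    simp only [mem_biUnion, mem_filter, motzSet, mem_univ, true_and]
    exact ⟨fun hp => ⟨_, (mem_filter.mp hp).2.isMotzkin_theta hn, hp, rfl⟩,
      fun ⟨_, _, hp, _⟩ => hp⟩
  · intro m _ m' _ hne
    exact disjoint_filter.mpr fun p _ hpm hpm' => hne (hpm.symm.trans hpm')
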